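/- arXiv:2402.10465 — 2 statements merged into one kernel-verified Lean document; each statement's English description precedes it below -/
import Mathlib

section
/- Let R = F_2[x]/⟨x³−x⟩ and let u denote the image of x in R, so that every element of R is uniquely of the form a + bu + cu² with a, b, c ∈ F_2. The F_2-linear map τ : R → F_2 defined by τ(a + bu + cu²) = c is surjective and its kernel contains no nonzero ideal of R (i.e., τ is an F_2-valued trace of R). -/
/-!
Take `τ` to be the `u²`-coordinate in the basis `1, u, u²`. Since `u³ = u`, multiplication by `u`
sends the coordinates `(a, b, c)` to `(0, a + c, b)`, so `τ r = c`, `τ (u r) = b` and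
`τ (u² r) = a + c`. An ideal inside `ker τ` contains `u r` and `u² r` along with `r`, so all three
vanish and `r = 0`.
-/

open Polynomial

/-- The `F₂`-algebra `R₂ = F₂[x]/⟨x³ − x⟩`. -/
abbrev R2 : Type :=
  Polynomial (ZMod 2) ⧸ Ideal.span {(X ^ 3 - X : Polynomial (ZMod 2))}

/-- `u`, the image of `x` in `R₂`. -/
noncomputable def uu : R2 := Ideal.Quotient.mk _ X

namespace PowBasisThree

variable {K A : Type*} [CommRing K] [CommRing A] [Algebra K A] {u : A}
  (b : Module.Basis (Fin 3) K A)

theorem equivFun_symm_apply_vecCons (hb : ∀ i, b i = u ^ (i : ℕ)) (x y z : K) :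
    b.equivFun.symm ![x, y, z] = algebraMap K A x + y • u + z • u ^ 2 := by
  simp [Module.Basis.equivFun_symm_apply, Fin.sum_univ_three, hb, Algebra.algebraMap_eq_smul_one]

theorem equivFun_apply (hb : ∀ i, b i = u ^ (i : ℕ)) (x y z : K) :
    b.equivFun (algebraMap K A x + y • u + z • u ^ 2) = ![x, y, z] := by
  rw [← equivFun_symm_apply_vecCons b hb, LinearEquiv.apply_symm_apply]

theorem coord_two_apply (hb : ∀ i, b i = u ^ (i : ℕ)) (x y z : K) :
    b.coord 2 (algebraMap K A x + y • u + z • u ^ 2) = z := by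
  rw [Module.Basis.coord_apply, ← Module.Basis.equivFun_apply, equivFun_apply b hb]
  rfl

theorem existsUnique_eq (hb : ∀ i, b i = u ^ (i : ℕ)) (r : A) :
    ∃! xyz : K × K × K, r = algebraMap K A xyz.1 + xyz.2.1 • u + xyz.2.2 • u ^ 2 := by
  refine ⟨(b.equivFun r 0, b.equivFun r 1, b.equivFun r 2), ?_, ?_⟩
  · dsimp only
    rw [← equivFun_symm_apply_vecCons b hb]
    refine (b.equivFun.symm_apply_apply r).symm.trans (congrArg _ ?_)
    ext i
    fin_cases i <;> rfl
  · rintro ⟨x, y, z⟩ hr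
    have hcoords := equivFun_apply b hb x y z
    rw [← hr] at hcoords
    simp [hcoords]

theorem mul_algebraMap_add_smul_add_smul (hu : u ^ 3 = u) (x y z : K) :
    u * (algebraMap K A x + y • u + z • u ^ 2) = algebraMap K A 0 + (x + z) • u + y • u ^ 2 := by
  simp only [Algebra.smul_def, map_zero, map_add]
  linear_combination algebraMap K A z * hu

theorem ideal_eq_bot_of_subset_ker_coord_two (hb : ∀ i, b i = u ^ (i : ℕ)) (hu : u ^ 3 = u)
    (I : Ideal A) (hI : (I : Set A) ⊆ LinearMap.ker (b.coord 2)) : I = ⊥ := by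
  refine (Submodule.eq_bot_iff I).2 fun r hr => ?_
  obtain ⟨⟨x, y, z⟩, rfl, -⟩ := existsUnique_eq b hb r
  have hτ (s : A) (hs : s ∈ I) : b.coord 2 s = 0 := hI hs
  have hz : z = 0 := by
    simpa only [coord_two_apply b hb] using hτ _ hr
  have hy : y = 0 := by
    simpa only [mul_algebraMap_add_smul_add_smul hu, coord_two_apply b hb]
      using hτ _ (I.mul_mem_left u hr)
  have hxz : x + z = 0 := by
    simpa only [mul_algebraMap_add_smul_add_smul hu, coord_two_apply b hb]
      using hτ _ (I.mul_mem_left u (I.mul_mem_left u hr))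
  rw [hz, add_zero] at hxz
  simp [hxz, hy, hz]

end PowBasisThree

section

variable {K : Type*} [CommRing K]

theorem monic_X_pow_three_sub_X [Nontrivial K] : (X ^ 3 - X : K[X]).Monic :=
  monic_X_pow_sub (by rw [degree_X]; norm_num)

theorem natDegree_X_pow_three_sub_X [Nontrivial K] : (X ^ 3 - X : K[X]).natDegree = 3 := by
  compute_degree!

noncomputable def AdjoinRoot.basisOfNatDegreeEq {f : K[X]} (hf : f.Monic) {n : ℕ}
    (hn : f.natDegree = n) : Module.Basis (Fin n) K (AdjoinRoot f) :=
  (AdjoinRoot.powerBasis' hf).basis.reindex (finCongr hn)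

theorem AdjoinRoot.basisOfNatDegreeEq_apply {f : K[X]} (hf : f.Monic) {n : ℕ}
    (hn : f.natDegree = n) (i : Fin n) :
    AdjoinRoot.basisOfNatDegreeEq hf hn i = AdjoinRoot.root f ^ (i : ℕ) := by
  rw [AdjoinRoot.basisOfNatDegreeEq, Module.Basis.reindex_apply, PowerBasis.basis_eq_pow]
  rfl

end

theorem uu_pow_three : uu ^ 3 = uu := by
  have h := AdjoinRoot.mk_self (f := (X ^ 3 - X : (ZMod 2)[X]))
  rw [map_sub, map_pow, AdjoinRoot.mk_X, sub_eq_zero] at h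
  exact h

/-- every element of `R₂` is uniquely of the form `a + b·u + c·u²` with
`a, b, c ∈ F₂`, and the `F₂`-linear map `τ : R₂ → F₂` sending `a + b·u + c·u²` to `c` is
surjective with kernel containing no nonzero ideal of `R₂` (i.e. `τ` is an `F₂`-valued
trace of `R₂`). -/
theorem stmt0 :
    (∀ r : R2, ∃! abc : ZMod 2 × ZMod 2 × ZMod 2,
        r = algebraMap (ZMod 2) R2 abc.1 + abc.2.1 • uu + abc.2.2 • uu ^ 2) ∧
    ∃ τ : R2 →ₗ[ZMod 2] ZMod 2,
      (∀ a b c : ZMod 2, τ (algebraMap (ZMod 2) R2 a + b • uu + c • uu ^ 2) = c) ∧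
      Function.Surjective τ ∧
      (∀ I : Ideal R2, (I : Set R2) ⊆ (LinearMap.ker τ : Set R2) → I = ⊥) := by
  let b : Module.Basis (Fin 3) (ZMod 2) R2 :=
    AdjoinRoot.basisOfNatDegreeEq monic_X_pow_three_sub_X natDegree_X_pow_three_sub_X
  have hb (i : Fin 3) : b i = uu ^ (i : ℕ) :=
    AdjoinRoot.basisOfNatDegreeEq_apply _ _ i
  refine ⟨PowBasisThree.existsUnique_eq b hb, b.coord 2, PowBasisThree.coord_two_apply b hb,
    fun c => ⟨c • uu ^ 2, ?_⟩, PowBasisThree.ideal_eq_bot_of_subset_ker_coord_two b hb uu_pow_three⟩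
  simpa using PowBasisThree.coord_two_apply b hb 0 0 c
end

section
/- Let L, M, N ⊆ [m] with L a proper subset of [m] and with L, M, N not all empty, and let C = C(Δ_L^c, Δ_M, Δ_N). Then C is a binary linear code of length (2^m − 2^{|L|})·2^{|M|+|N|}, dimension m + |M| + |N|, and minimum distance (2^m − 2^{|L|})·2^{|M|+|N|−1}; its weight enumerator equals 1 + (2^{m+|M|+|N|} − 2^{m−|L|})·X^{(2^m − 2^{|L|})·2^{|M|+|N|−1}} + (2^{m−|L|} − 1)·X^{2^{m+|M|+|N|−1}}; and C is a Griesmer code, i.e., Σ_{i=0}^{k−1} ⌈d/2^i⌉ = n for these n, k, d. -/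
/-!
With `χ(a) = (-1)^a`, a binary word of length `n` has `2 wt(c) = n - Σ_d χ(c_d)`. For a codeword
`c(α,β,γ)` the character sum factors over the three coordinate sets, and `Σ_{d ∈ Δ_S} χ(v·d)` is
`2^|S|` or `0` according as `v` vanishes on `S` or not (`Δ_S^⊥ = Δ_{Sᶜ}`). Hence every nonzero
codeword has weight `n/2` or `2^{m+|M|+|N|-1}`, the latter exactly for `c(α,0,0)` with
`0 ≠ α ∈ Δ_{Lᶜ}`. The weight-zero case identifies the kernel of `(α,β,γ) ↦ c(α,β,γ)`, which gives
the dimension; the Griesmer identity is the classical computation for `d = 2^t (2^s - 1)`,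
`k = s + t + 1`.
-/

open Finset Polynomial
open scoped Classical

/-- `V m` is the vector space `F₂^m`. -/
abbrev V (m : ℕ) := Fin m → ZMod 2

/-- Dot product `x·y = Σ_i x_i y_i` in `F₂`. -/
def dot {m : ℕ} (x y : V m) : ZMod 2 := ∑ i, x i * y i

/-- `Supp v = {i : v i ≠ 0}`. -/
def supp {m : ℕ} (v : V m) : Finset (Fin m) := Finset.univ.filter fun i => v i ≠ 0

/-- The simplicial complex `Δ_L = {v : Supp v ⊆ L}` generated by `L`. -/
def Δ {m : ℕ} (L : Finset (Fin m)) : Finset (V m) := Finset.univ.filter fun v => supp v ⊆ L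

/-- Hamming weight of a vector. -/
def wtv {ι : Type} [Fintype ι] (c : ι → ZMod 2) : ℕ :=
  (Finset.univ.filter fun i => c i ≠ 0).card

/-- The linear functional `x ↦ x·y`. -/
noncomputable def dotL {m : ℕ} (y : V m) : V m →ₗ[ZMod 2] ZMod 2 :=
  ∑ i, LinearMap.smulRight (LinearMap.proj i) (y i)

/-- The linear map `(α,β,γ) ↦ ((d₁,d₂,d₃) ↦ α·d₁ + (β+γ)·d₂ + β·d₃)` whose range is the
binary code `C(D₁,D₂,D₃)`. -/
noncomputable def codeMap {m : ℕ} (D₁ D₂ D₃ : Finset (V m)) :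
    (V m × V m × V m) →ₗ[ZMod 2]
      (({x // x ∈ D₁} × {x // x ∈ D₂} × {x // x ∈ D₃}) → ZMod 2) :=
  LinearMap.pi fun d =>
    (dotL d.1.1).comp (LinearMap.fst (ZMod 2) (V m) (V m × V m))
    + (dotL d.2.1.1).comp
        (((LinearMap.fst (ZMod 2) (V m) (V m)).comp (LinearMap.snd (ZMod 2) (V m) (V m × V m)))
          + ((LinearMap.snd (ZMod 2) (V m) (V m)).comp (LinearMap.snd (ZMod 2) (V m) (V m × V m))))
    + (dotL d.2.2.1).comp
        ((LinearMap.fst (ZMod 2) (V m) (V m)).comp (LinearMap.snd (ZMod 2) (V m) (V m × V m)))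

lemma codeMap_apply {m : ℕ} (D₁ D₂ D₃ : Finset (V m)) (α β γ : V m)
    (d : {x // x ∈ D₁} × {x // x ∈ D₂} × {x // x ∈ D₃}) :
    codeMap D₁ D₂ D₃ (α, β, γ) d = dot α d.1.1 + dot (β + γ) d.2.1.1 + dot β d.2.2.1 := by
  simp [codeMap, dotL, dot, LinearMap.smulRight, mul_comm]

def chi (a : ZMod 2) : ℤ := if a = 0 then 1 else -1

lemma chi_add (a b : ZMod 2) : chi (a + b) = chi a * chi b := by
  revert a b; decide

lemma chi_sum {ι : Type*} (s : Finset ι) (f : ι → ZMod 2) :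
    chi (∑ i ∈ s, f i) = ∏ i ∈ s, chi (f i) := by
  induction s using Finset.cons_induction with
  | empty => rfl
  | cons a s ha ih => rw [sum_cons, prod_cons, chi_add, ih]

lemma sum_chi_mul (a : ZMod 2) : ∑ x, chi (a * x) = if a = 0 then 2 else 0 := by
  revert a; decide

lemma two_mul_wtv {ι : Type} [Fintype ι] (c : ι → ZMod 2) :
    2 * (wtv c : ℤ) = Fintype.card ι - ∑ i, chi (c i) := by
  have hchi : ∀ i, chi (c i) = 1 - 2 * (if c i ≠ 0 then 1 else 0) := fun i => by
    by_cases h : c i = 0 <;> simp [chi, h]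
  simp only [hchi, sum_sub_distrib, ← mul_sum, sum_boole, wtv]
  simp

lemma wtv_eq_zero_iff {ι : Type} [Fintype ι] (c : ι → ZMod 2) : wtv c = 0 ↔ c = 0 := by
  simp [wtv, funext_iff]

theorem Finset.sum_comp_eq_of_forall_eq_or_eq_or_eq {ι κ R : Type*} [DecidableEq κ]
    [AddCommMonoid R] {s : Finset ι} {f : ι → κ} {a b c : κ} (hab : a ≠ b) (hac : a ≠ c)
    (hbc : b ≠ c) (h : ∀ x ∈ s, f x = a ∨ f x = b ∨ f x = c) (g : κ → R) :
    ∑ x ∈ s, g (f x) =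
      #{x ∈ s | f x = a} • g a + #{x ∈ s | f x = b} • g b + #{x ∈ s | f x = c} • g c := by
  have hfiber : ∀ v, ∑ x ∈ s with f x = v, g (f x) = #{x ∈ s | f x = v} • g v := fun v => by
    rw [← sum_const]
    exact sum_congr rfl fun x hx => by rw [(mem_filter.1 hx).2]
  rw [← sum_fiberwise_of_maps_to (t := {a, b, c}) (by simpa using h),
    sum_insert (by simp [hab, hac]), sum_insert (by simp [hbc]), sum_singleton,
    hfiber, hfiber, hfiber, add_assoc]

lemma ceil_two_pow_sub_one_div_two_pow {s j : ℕ} (hj : 1 ≤ j) (hjs : j ≤ s) :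
    ⌈((2 : ℚ) ^ s - 1) / 2 ^ j⌉ = 2 ^ (s - j) := by
  have hsplit : (2 : ℚ) ^ s = 2 ^ (s - j) * 2 ^ j := by rw [← pow_add, Nat.sub_add_cancel hjs]
  have hj2 : (2 : ℚ) ≤ 2 ^ j := le_self_pow₀ one_le_two (by omega)
  rw [Int.ceil_eq_iff, hsplit, sub_div, mul_div_cancel_right₀ _ (by positivity)]
  push_cast
  constructor
  · rw [sub_lt_sub_iff_left, div_lt_one (by positivity)]
    linarith
  · exact sub_le_self _ (by positivity)

theorem sum_ceil_two_pow_mul_div_two_pow (s t : ℕ) :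
    ∑ i ∈ range (s + t + 1), ⌈((2 : ℚ) ^ t * (2 ^ s - 1)) / 2 ^ i⌉ =
      2 ^ (t + 1) * (2 ^ s - 1) := by
  induction t with
  | zero =>
    have hceil : ∀ i ∈ range s, ⌈((2 : ℚ) ^ 0 * (2 ^ s - 1)) / 2 ^ (i + 1)⌉ = 2 ^ (s - 1 - i) :=
      fun i hi => by
        rw [pow_zero, one_mul, ceil_two_pow_sub_one_div_two_pow (by omega) (by simpa using hi)]
        congr 1
        omega
    have hgeom : ∑ j ∈ range s, (2 : ℤ) ^ j = 2 ^ s - 1 := by simpa using geom_sum_mul (2 : ℤ) s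
    rw [sum_range_succ', sum_congr rfl hceil, sum_range_reflect (2 ^ ·) s, hgeom, pow_zero,
      one_mul, div_one, show (2 : ℚ) ^ s - 1 = ((2 ^ s - 1 : ℤ) : ℚ) by push_cast; rfl,
      Int.ceil_intCast]
    ring
  | succ t ih =>
    have hhalve : ∀ i ∈ range (s + t + 1), ⌈((2 : ℚ) ^ (t + 1) * (2 ^ s - 1)) / 2 ^ (i + 1)⌉ =
        ⌈((2 : ℚ) ^ t * (2 ^ s - 1)) / 2 ^ i⌉ :=
      fun i _ => by rw [pow_succ, pow_succ 2 i, mul_right_comm, mul_div_mul_right _ _ two_ne_zero]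
    rw [show s + (t + 1) + 1 = s + t + 1 + 1 by ring, sum_range_succ', sum_congr rfl hhalve, ih,
      pow_zero, div_one, show (2 : ℚ) ^ (t + 1) * (2 ^ s - 1) =
        ((2 ^ (t + 1) * (2 ^ s - 1) : ℤ) : ℚ) by push_cast; rfl, Int.ceil_intCast]
    ring

theorem sum_ceil_two_pow_sub_two_pow_mul_div_two_pow {m a b : ℕ} (ham : a ≤ m)
    (hab : 1 ≤ a + b) :
    ∑ i ∈ range (m + b), ⌈(((2 ^ m - 2 ^ a) * 2 ^ b / 2 : ℚ)) / 2 ^ i⌉ =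
      ((2 ^ m - 2 ^ a) * 2 ^ b : ℤ) := by
  obtain ⟨s, rfl⟩ := Nat.exists_eq_add_of_le ham
  obtain ⟨t, ht⟩ : ∃ t, a + b = t + 1 := ⟨a + b - 1, by omega⟩
  have hq : ((2 : ℚ) ^ (a + s) - 2 ^ a) * 2 ^ b / 2 = 2 ^ t * (2 ^ s - 1) := by
    have : (2 : ℚ) ^ a * 2 ^ b = 2 ^ t * 2 := by rw [← pow_add, ht, pow_succ]
    linear_combination ((2 : ℚ) ^ s - 1) / 2 * this
  have hz : ((2 : ℤ) ^ (a + s) - 2 ^ a) * 2 ^ b = 2 ^ (t + 1) * (2 ^ s - 1) := by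
    have : (2 : ℤ) ^ a * 2 ^ b = 2 ^ (t + 1) := by rw [← pow_add, ht]
    linear_combination ((2 : ℤ) ^ s - 1) * this
  rw [hq, hz, show a + s + b = s + t + 1 by omega, sum_ceil_two_pow_mul_div_two_pow]

variable {m : ℕ}

lemma card_le_dim (S : Finset (Fin m)) : #S ≤ m :=
  (card_le_univ S).trans_eq (Fintype.card_fin m)

lemma card_lt_dim {S : Finset (Fin m)} (hS : S ⊂ univ) : #S < m :=
  ((card_lt_iff_ne_univ S).2 hS.ne).trans_eq (Fintype.card_fin m)

lemma mem_Δ {S : Finset (Fin m)} {v : V m} : v ∈ Δ S ↔ ∀ i ∉ S, v i = 0 := by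
  simp only [Δ, supp, mem_filter, mem_univ, true_and, subset_iff]
  exact forall_congr' fun i => by tauto

lemma zero_mem_Δ (S : Finset (Fin m)) : (0 : V m) ∈ Δ S := mem_Δ.2 fun _ _ => rfl

lemma Δ_empty : Δ (∅ : Finset (Fin m)) = {0} := by
  ext v; simp [mem_Δ, funext_iff]

lemma Δ_univ : Δ (univ : Finset (Fin m)) = univ :=
  eq_univ_of_forall fun v => by simp [mem_Δ]

lemma exists_notMem_Δ_compl {S : Finset (Fin m)} (hS : S ≠ ∅) : ∃ v : V m, v ∉ Δ Sᶜ := by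
  obtain ⟨i, hi⟩ := nonempty_iff_ne_empty.2 hS
  exact ⟨Pi.single i 1, fun h => by simpa using mem_Δ.1 h i (by simpa using hi)⟩

lemma Δ_eq_piFinset (S : Finset (Fin m)) :
    Δ S = Fintype.piFinset fun i => if i ∈ S then univ else {0} := by
  ext v
  simp only [mem_Δ, Fintype.mem_piFinset]
  exact forall_congr' fun i => by split_ifs <;> simp [*]

lemma card_Δ (S : Finset (Fin m)) : #(Δ S) = 2 ^ #S := by
  rw [Δ_eq_piFinset, Fintype.card_piFinset]
  calc ∏ i, #(if i ∈ S then (univ : Finset (ZMod 2)) else {0}) = ∏ i, if i ∈ S then 2 else 1 :=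
        prod_congr rfl fun i _ => by split_ifs <;> rfl
    _ = 2 ^ #S := by rw [prod_ite_mem]; simp

lemma sum_chi_dot_Δ (S : Finset (Fin m)) (v : V m) :
    ∑ d ∈ Δ S, chi (dot v d) = if v ∈ Δ Sᶜ then 2 ^ #S else 0 := by
  simp only [dot, chi_sum]
  rw [Δ_eq_piFinset S,
    ← prod_univ_sum (fun i => if i ∈ S then univ else {0}) fun i x => chi (v i * x)]
  calc ∏ i, ∑ x ∈ (if i ∈ S then univ else {0}), chi (v i * x)
        = ∏ i, if i ∈ S then (if v i = 0 then 2 else 0) else 1 :=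
        prod_congr rfl fun i _ => by
          by_cases hi : i ∈ S
          · simp only [hi, if_true]
            exact sum_chi_mul (v i)
          · simp [hi, chi]
    _ = if v ∈ Δ Sᶜ then 2 ^ #S else 0 := by
        rw [prod_ite_mem, prod_ite_zero]
        simp [mem_Δ]

lemma sum_chi_dot_compl_Δ (S : Finset (Fin m)) (v : V m) :
    ∑ d ∈ (Δ S)ᶜ, chi (dot v d) =
      (if v = 0 then 2 ^ m else 0) - if v ∈ Δ Sᶜ then 2 ^ #S else 0 := by
  have huniv := sum_chi_dot_Δ univ v
  simp only [compl_univ, Δ_empty, Δ_univ, mem_singleton, card_univ, Fintype.card_fin] at huniv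
  rw [← huniv, ← sum_chi_dot_Δ, ← sum_compl_add_sum (Δ S), add_sub_cancel_right]

lemma sum_chi_codeMap (D₁ D₂ D₃ : Finset (V m)) (α β γ : V m) :
    ∑ d, chi (codeMap D₁ D₂ D₃ (α, β, γ) d) =
      (∑ d ∈ D₁, chi (dot α d)) * ((∑ d ∈ D₂, chi (dot (β + γ) d)) * ∑ d ∈ D₃, chi (dot β d)) := by
  rw [← sum_coe_sort D₁, ← sum_coe_sort D₂, ← sum_coe_sort D₃]
  simp only [codeMap_apply, chi_add, mul_assoc, Fintype.sum_prod_type, sum_mul_sum]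
  simp only [mul_sum]

lemma card_compl_Δ_prod_Δ_prod_Δ (L M N : Finset (Fin m)) :
    Fintype.card ({x // x ∈ (Δ L)ᶜ} × {x // x ∈ Δ M} × {x // x ∈ Δ N}) =
      (2 ^ m - 2 ^ #L) * 2 ^ (#M + #N) := by
  simp only [Fintype.card_prod, Fintype.card_coe, card_compl, card_Δ, Fintype.card_pi,
    ZMod.card, prod_const, card_univ, Fintype.card_fin, pow_add]

/-- The three factors of the character sum are `2^m [α = 0] - 2^|L| [α ∈ Δ_{Lᶜ}]`,
`2^|M| [β + γ ∈ Δ_{Mᶜ}]` and `2^|N| [β ∈ Δ_{Nᶜ}]`. -/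
lemma two_mul_wtv_codeMap (L M N : Finset (Fin m)) (α β γ : V m) :
    2 * wtv (codeMap (Δ L)ᶜ (Δ M) (Δ N) (α, β, γ)) =
      if α ∈ Δ Lᶜ ∧ β + γ ∈ Δ Mᶜ ∧ β ∈ Δ Nᶜ then (if α = 0 then 0 else 2 ^ (m + #M + #N))
      else (2 ^ m - 2 ^ #L) * 2 ^ (#M + #N) := by
  have h := two_mul_wtv (codeMap (Δ L)ᶜ (Δ M) (Δ N) (α, β, γ))
  rw [sum_chi_codeMap, sum_chi_dot_compl_Δ, sum_chi_dot_Δ, sum_chi_dot_Δ,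
    card_compl_Δ_prod_Δ_prod_Δ] at h
  zify [Nat.pow_le_pow_right two_pos (card_le_dim L)] at h ⊢
  rw [h]
  have := zero_mem_Δ Lᶜ
  split_ifs <;> simp_all <;> ring

section Code

variable {L M N : Finset (Fin m)}

lemma length_pos (hL : L ⊂ univ) : 0 < (2 ^ m - 2 ^ #L) * 2 ^ (#M + #N) :=
  Nat.mul_pos (Nat.sub_pos_of_lt (Nat.pow_lt_pow_right one_lt_two (card_lt_dim hL)))
    (Nat.two_pow_pos _)

lemma length_lt_two_pow : (2 ^ m - 2 ^ #L) * 2 ^ (#M + #N) < 2 ^ (m + #M + #N) := by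
  rw [add_assoc, pow_add 2 m]
  exact Nat.mul_lt_mul_of_pos_right (Nat.sub_lt (Nat.two_pow_pos m) (Nat.two_pow_pos _))
    (Nat.two_pow_pos _)

lemma one_le_card_add_card_add_card (hne : L ≠ ∅ ∨ M ≠ ∅ ∨ N ≠ ∅) : 1 ≤ #L + (#M + #N) := by
  rcases hne with h | h | h <;> have := card_pos.2 (nonempty_iff_ne_empty.2 h) <;> omega

lemma two_dvd_length (hL : L ⊂ univ) (hne : L ≠ ∅ ∨ M ≠ ∅ ∨ N ≠ ∅) :
    2 ∣ (2 ^ m - 2 ^ #L) * 2 ^ (#M + #N) := by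
  have := one_le_card_add_card_add_card hne
  by_cases hMN : #M + #N = 0
  · have hm : m ≠ 0 := by have := card_lt_dim hL; omega
    exact (Nat.dvd_sub (dvd_pow_self 2 hm) (dvd_pow_self 2 (by omega))).mul_right _
  · exact (dvd_pow_self 2 hMN).mul_left _

lemma two_mul_two_pow_pred (hL : L ⊂ univ) : 2 * 2 ^ (m + #M + #N - 1) = 2 ^ (m + #M + #N) :=
  mul_pow_sub_one (by have := card_lt_dim hL; omega) 2

lemma two_mul_wtv_of_mem_range {c} (hc : c ∈ LinearMap.range (codeMap (Δ L)ᶜ (Δ M) (Δ N))) :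
    2 * wtv c = 0 ∨ 2 * wtv c = (2 ^ m - 2 ^ #L) * 2 ^ (#M + #N) ∨
      2 * wtv c = 2 ^ (m + #M + #N) := by
  obtain ⟨⟨α, β, γ⟩, rfl⟩ := hc
  rw [two_mul_wtv_codeMap]
  split_ifs <;> simp

lemma exists_two_mul_wtv_codeMap_eq_length (hne : L ≠ ∅ ∨ M ≠ ∅ ∨ N ≠ ∅) :
    ∃ x, 2 * wtv (codeMap (Δ L)ᶜ (Δ M) (Δ N) x) = (2 ^ m - 2 ^ #L) * 2 ^ (#M + #N) := by
  have key : ∀ α β γ : V m, ¬(α ∈ Δ Lᶜ ∧ β + γ ∈ Δ Mᶜ ∧ β ∈ Δ Nᶜ) →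
      2 * wtv (codeMap (Δ L)ᶜ (Δ M) (Δ N) (α, β, γ)) = (2 ^ m - 2 ^ #L) * 2 ^ (#M + #N) :=
    fun α β γ h => by rw [two_mul_wtv_codeMap, if_neg h]
  rcases hne with h | h | h <;> obtain ⟨v, hv⟩ := exists_notMem_Δ_compl h
  · exact ⟨_, key v 0 0 fun h => hv h.1⟩
  · exact ⟨_, key 0 0 v fun h => hv (by simpa using h.2.1)⟩
  · exact ⟨_, key 0 v 0 fun h => hv h.2.2⟩

lemma codeMap_eq_zero_iff (hL : L ⊂ univ) (α β γ : V m) :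
    codeMap (Δ L)ᶜ (Δ M) (Δ N) (α, β, γ) = 0 ↔ α = 0 ∧ β + γ ∈ Δ Mᶜ ∧ β ∈ Δ Nᶜ := by
  have hn := length_pos (M := M) (N := N) hL
  rw [← wtv_eq_zero_iff, ← mul_eq_zero_iff_left two_ne_zero, two_mul_wtv_codeMap]
  have := zero_mem_Δ Lᶜ
  split_ifs <;> simp_all [hn.ne']

lemma codeMap_eq_codeMap_zero (hL : L ⊂ univ) {α β γ : V m} (hM : β + γ ∈ Δ Mᶜ)
    (hN : β ∈ Δ Nᶜ) :
    codeMap (Δ L)ᶜ (Δ M) (Δ N) (α, β, γ) = codeMap (Δ L)ᶜ (Δ M) (Δ N) (α, 0, 0) := by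
  rw [← sub_eq_zero, ← map_sub, Prod.mk_sub_mk, Prod.mk_sub_mk, sub_self, sub_zero, sub_zero,
    codeMap_eq_zero_iff hL]
  exact ⟨rfl, hM, hN⟩

lemma codeMap_fst_injective (hL : L ⊂ univ) :
    Function.Injective fun α : V m => codeMap (Δ L)ᶜ (Δ M) (Δ N) (α, 0, 0) := fun α α' h => by
  rw [← sub_eq_zero, ← map_sub, Prod.mk_sub_mk, Prod.mk_sub_mk, sub_zero,
    codeMap_eq_zero_iff hL] at h
  exact sub_eq_zero.1 h.1

lemma ker_codeMap_eq_image (hL : L ⊂ univ) :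
    ({x | codeMap (Δ L)ᶜ (Δ M) (Δ N) x = 0} : Finset (V m × V m × V m)) =
      (Δ Nᶜ ×ˢ Δ Mᶜ).image fun p : V m × V m => ((0 : V m), p.1, p.2 - p.1) := by
  ext x
  rcases x with ⟨α, β, γ⟩
  simp only [mem_filter, mem_univ, true_and, codeMap_eq_zero_iff hL, mem_image, mem_product,
    Prod.mk.injEq]
  constructor
  · rintro ⟨rfl, hM, hN⟩
    exact ⟨(β, β + γ), ⟨hN, hM⟩, rfl, rfl, add_sub_cancel_left β γ⟩
  · rintro ⟨⟨β', δ⟩, ⟨hN, hM⟩, rfl, rfl, rfl⟩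
    exact ⟨rfl, by rwa [add_sub_cancel], hN⟩

lemma card_ker_codeMap (hL : L ⊂ univ) :
    Fintype.card (LinearMap.ker (codeMap (Δ L)ᶜ (Δ M) (Δ N))) = 2 ^ (m - #N + (m - #M)) := by
  have hinj : Function.Injective fun p : V m × V m => ((0 : V m), p.1, p.2 - p.1) :=
    fun p q h => by
      simp only [Prod.mk.injEq, true_and] at h
      exact Prod.ext h.1 (sub_left_inj.1 (h.1 ▸ h.2))
  simp only [Fintype.card_subtype, LinearMap.mem_ker]
  rw [ker_codeMap_eq_image hL, card_image_of_injective _ hinj, card_product, card_Δ, card_Δ,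
    card_compl, card_compl, Fintype.card_fin, pow_add]

lemma finrank_range_codeMap (hL : L ⊂ univ) :
    Module.finrank (ZMod 2) (LinearMap.range (codeMap (Δ L)ᶜ (Δ M) (Δ N))) = m + #M + #N := by
  have hker := card_ker_codeMap (M := M) (N := N) hL
  rw [Module.card_eq_pow_finrank (K := ZMod 2), ZMod.card] at hker
  have hrank := LinearMap.finrank_range_add_finrank_ker (codeMap (Δ L)ᶜ (Δ M) (Δ N))
  rw [Nat.pow_right_injective le_rfl hker] at hrank
  simp only [Module.finrank_prod, Module.finrank_fin_fun] at hrank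
  have := card_le_dim M
  have := card_le_dim N
  omega

lemma card_range_codeMap (hL : L ⊂ univ) :
    #{c | c ∈ LinearMap.range (codeMap (Δ L)ᶜ (Δ M) (Δ N))} = 2 ^ (m + #M + #N) := by
  rw [← Fintype.card_subtype, Module.card_eq_pow_finrank (K := ZMod 2),
    finrank_range_codeMap hL, ZMod.card]

lemma filter_wtv_eq_zero :
    ({c ∈ {c | c ∈ LinearMap.range (codeMap (Δ L)ᶜ (Δ M) (Δ N))} | wtv c = 0} : Finset _) =
      {0} := by
  ext c
  simp only [mem_filter, mem_univ, true_and, mem_singleton, wtv_eq_zero_iff]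
  exact ⟨And.right, fun h => ⟨h ▸ Submodule.zero_mem _, h⟩⟩

lemma filter_wtv_eq_two_pow_pred (hL : L ⊂ univ) :
    ({c ∈ {c | c ∈ LinearMap.range (codeMap (Δ L)ᶜ (Δ M) (Δ N))} |
        wtv c = 2 ^ (m + #M + #N - 1)} : Finset _) =
      ((Δ Lᶜ).erase 0).image fun α => codeMap (Δ L)ᶜ (Δ M) (Δ N) (α, 0, 0) := by
  have h2 := two_mul_two_pow_pred (M := M) (N := N) hL
  have hlt := length_lt_two_pow (L := L) (M := M) (N := N)
  ext c
  simp only [mem_filter, mem_univ, true_and, mem_image, mem_erase, LinearMap.mem_range]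
  constructor
  · rintro ⟨⟨⟨α, β, γ⟩, rfl⟩, hw⟩
    have hwt := two_mul_wtv_codeMap L M N α β γ
    rw [hw, h2] at hwt
    split_ifs at hwt with hcond hα
    · exact absurd hwt (Nat.two_pow_pos _).ne'
    · exact ⟨α, ⟨hα, hcond.1⟩, (codeMap_eq_codeMap_zero hL hcond.2.1 hcond.2.2).symm⟩
    · omega
  · rintro ⟨α, ⟨hα, hαL⟩, rfl⟩
    refine ⟨⟨_, rfl⟩, ?_⟩
    have hwt := two_mul_wtv_codeMap L M N α 0 0
    rw [if_pos ⟨hαL, by simpa using zero_mem_Δ Mᶜ, zero_mem_Δ Nᶜ⟩, if_neg hα, ← h2] at hwt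
    omega

lemma card_filter_wtv_eq_two_pow_pred (hL : L ⊂ univ) :
    #{c ∈ {c | c ∈ LinearMap.range (codeMap (Δ L)ᶜ (Δ M) (Δ N))} |
        wtv c = 2 ^ (m + #M + #N - 1)} = 2 ^ (m - #L) - 1 := by
  rw [filter_wtv_eq_two_pow_pred hL, card_image_of_injective _ (codeMap_fst_injective hL),
    card_erase_of_mem (zero_mem_Δ _), card_Δ, card_compl, Fintype.card_fin]

lemma isLeast_wtv_range_codeMap (hL : L ⊂ univ) (hne : L ≠ ∅ ∨ M ≠ ∅ ∨ N ≠ ∅) :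
    IsLeast {w : ℕ | ∃ c ∈ LinearMap.range (codeMap (Δ L)ᶜ (Δ M) (Δ N)), c ≠ 0 ∧ wtv c = w}
      (((2 ^ m - 2 ^ #L) * 2 ^ (#M + #N)) / 2) := by
  have hpos := length_pos (M := M) (N := N) hL
  have hlt := length_lt_two_pow (L := L) (M := M) (N := N)
  have heven := two_dvd_length hL hne
  refine ⟨?_, ?_⟩
  · obtain ⟨x, hx⟩ := exists_two_mul_wtv_codeMap_eq_length hne
    refine ⟨_, LinearMap.mem_range_self _ x, fun h0 => ?_, by omega⟩
    rw [h0, (wtv_eq_zero_iff _).2 rfl] at hx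
    omega
  · rintro w ⟨c, hc, hc0, rfl⟩
    rcases two_mul_wtv_of_mem_range hc with h | h | h
    · exact absurd ((wtv_eq_zero_iff c).1 (by omega)) hc0
    all_goals omega

theorem weightEnumerator_codeMap (hL : L ⊂ univ) (hne : L ≠ ∅ ∨ M ≠ ∅ ∨ N ≠ ∅) :
    ∑ c ∈ {c | c ∈ LinearMap.range (codeMap (Δ L)ᶜ (Δ M) (Δ N))}, (X : ℤ[X]) ^ wtv c =
      1 + C ((2 : ℤ) ^ (m + #M + #N) - 2 ^ (m - #L)) *
          X ^ (((2 ^ m - 2 ^ #L) * 2 ^ (#M + #N)) / 2)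
        + C ((2 : ℤ) ^ (m - #L) - 1) * X ^ (2 ^ (m + #M + #N - 1)) := by
  have hpos := length_pos (M := M) (N := N) hL
  have hlt := length_lt_two_pow (L := L) (M := M) (N := N)
  have heven := two_dvd_length hL hne
  have h2 := two_mul_two_pow_pred (M := M) (N := N) hL
  have hvals : ∀ c ∈ ({c | c ∈ LinearMap.range (codeMap (Δ L)ᶜ (Δ M) (Δ N))} : Finset _),
      wtv c = 0 ∨ wtv c = ((2 ^ m - 2 ^ #L) * 2 ^ (#M + #N)) / 2 ∨
        wtv c = 2 ^ (m + #M + #N - 1) := fun c hc => by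
    have := two_mul_wtv_of_mem_range (by simpa using hc)
    omega
  have hab : 0 ≠ ((2 ^ m - 2 ^ #L) * 2 ^ (#M + #N)) / 2 := by omega
  have hac : 0 ≠ 2 ^ (m + #M + #N - 1) := by omega
  have hbc : ((2 ^ m - 2 ^ #L) * 2 ^ (#M + #N)) / 2 ≠ 2 ^ (m + #M + #N - 1) := by omega
  have hcard := sum_comp_eq_of_forall_eq_or_eq_or_eq hab hac hbc hvals fun _ => 1
  simp only [← card_eq_sum_ones, smul_eq_mul, mul_one, card_range_codeMap hL, filter_wtv_eq_zero,
    card_singleton, card_filter_wtv_eq_two_pow_pred hL] at hcard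
  have hone : 1 ≤ 2 ^ (m - #L) := Nat.one_le_two_pow
  rw [sum_comp_eq_of_forall_eq_or_eq_or_eq hab hac hbc hvals, filter_wtv_eq_zero, card_singleton,
    card_filter_wtv_eq_two_pow_pred hL, one_smul, pow_zero, nsmul_eq_mul, nsmul_eq_mul,
    ← map_natCast C, ← map_natCast C]
  congr 4
  · have := congrArg (Nat.cast : ℕ → ℤ) hcard
    push_cast [hone] at this
    linarith
  · push_cast [hone]
    rfl

end Code

theorem stmt6_general (m : ℕ) (L M N : Finset (Fin m))
    (hP : L ⊂ Finset.univ) (hne : L ≠ ∅ ∨ M ≠ ∅ ∨ N ≠ ∅) :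
    (Fintype.card ({x // x ∈ (Δ L)ᶜ} × {x // x ∈ (Δ M)} × {x // x ∈ (Δ N)}) = (2 ^ m - 2 ^ L.card) * 2 ^ (M.card + N.card)) ∧
    (Module.finrank (ZMod 2) ↥(LinearMap.range (codeMap (Δ L)ᶜ (Δ M) (Δ N))) = m + M.card + N.card) ∧
    IsLeast {w : ℕ | ∃ c ∈ LinearMap.range (codeMap (Δ L)ᶜ (Δ M) (Δ N)), c ≠ 0 ∧ wtv c = w}
      (((2 ^ m - 2 ^ L.card) * 2 ^ (M.card + N.card)) / 2) ∧
    ((∑ c ∈ Finset.univ.filter (fun c => c ∈ LinearMap.range (codeMap (Δ L)ᶜ (Δ M) (Δ N))),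
        (X : ℤ[X]) ^ wtv c)
      = 1 + Polynomial.C ((2 : ℤ) ^ (m + M.card + N.card) - 2 ^ (m - L.card)) * X ^ (((2 ^ m - 2 ^ L.card) * 2 ^ (M.card + N.card)) / 2)
          + Polynomial.C ((2 : ℤ) ^ (m - L.card) - 1) * X ^ (2 ^ (m + M.card + N.card - 1))) ∧
    (∑ i ∈ Finset.range (m + M.card + N.card), ⌈((((2 ^ m - 2 ^ L.card) * 2 ^ (M.card + N.card)) / 2 : ℚ)) / 2 ^ i⌉ = ((2 ^ m - 2 ^ L.card) * 2 ^ (M.card + N.card) : ℤ)) := by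
  refine ⟨card_compl_Δ_prod_Δ_prod_Δ L M N, finrank_range_codeMap hP,
    isLeast_wtv_range_codeMap hP hne, weightEnumerator_codeMap hP hne, ?_⟩
  rw [add_assoc]
  exact sum_ceil_two_pow_sub_two_pow_mul_div_two_pow (card_le_dim L)
    (one_le_card_add_card_add_card hne)

/-- Theorem 4.1(2): the code `C((Δ L)ᶜ, (Δ M), (Δ N))` is a two-weight
binary `[(2^m − 2^{|L|})·2^{|M|}+|N|}, m+|M|+|N|]` Griesmer code with the stated
weight distribution. -/
theorem stmt6 (m : ℕ) (hm : 1 ≤ m) (L M N : Finset (Fin m))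
    (hP : L ⊂ Finset.univ) (hne : L ≠ ∅ ∨ M ≠ ∅ ∨ N ≠ ∅) :
    (Fintype.card ({x // x ∈ (Δ L)ᶜ} × {x // x ∈ (Δ M)} × {x // x ∈ (Δ N)}) = (2 ^ m - 2 ^ L.card) * 2 ^ (M.card + N.card)) ∧
    (Module.finrank (ZMod 2) ↥(LinearMap.range (codeMap (Δ L)ᶜ (Δ M) (Δ N))) = m + M.card + N.card) ∧
    IsLeast {w : ℕ | ∃ c ∈ LinearMap.range (codeMap (Δ L)ᶜ (Δ M) (Δ N)), c ≠ 0 ∧ wtv c = w}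
      (((2 ^ m - 2 ^ L.card) * 2 ^ (M.card + N.card)) / 2) ∧
    ((∑ c ∈ Finset.univ.filter (fun c => c ∈ LinearMap.range (codeMap (Δ L)ᶜ (Δ M) (Δ N))),
        (X : ℤ[X]) ^ wtv c)
      = 1 + Polynomial.C ((2 : ℤ) ^ (m + M.card + N.card) - 2 ^ (m - L.card)) * X ^ (((2 ^ m - 2 ^ L.card) * 2 ^ (M.card + N.card)) / 2)
          + Polynomial.C ((2 : ℤ) ^ (m - L.card) - 1) * X ^ (2 ^ (m + M.card + N.card - 1))) ∧
    (∑ i ∈ Finset.range (m + M.card + N.card), ⌈((((2 ^ m - 2 ^ L.card) * 2 ^ (M.card + N.card)) / 2 : ℚ)) / 2 ^ i⌉ = ((2 ^ m - 2 ^ L.card) * 2 ^ (M.card + N.card) : ℤ)) :=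
  stmt6_general m L M N hP hne
end
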